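/- arXiv:2501.03837 — 5 statements merged into one kernel-verified Lean document; each statement's English description precedes it below -/
import Mathlib

section
/- Let F be a field of characteristic zero and q ∈ F nonzero and not a root of unity. If a nonzero rational function f ∈ F(y) satisfies f(q^ℓ y) = c·f(y) for some nonzero integer ℓ and some c ∈ F, then there exists an integer k such that f/y^k ∈ F, and moreover c = q^{ℓk}. -/
/-!
Write `f = p / s` in lowest terms and put `λ = q ^ ℓ`. The substitution `y ↦ λ y` preserves
degrees and coprimality, so `f(λ y) = c f(y)` forces `p` and `s` to be associated to their own
substitutes. Substitution multiplies the `i`-th coefficient by `λ ^ i`, so for a polynomial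
associated to its substitute all nonzero coefficients sit at exponents `i` with the same `λ ^ i`;
as `λ` is not a root of unity, `p` and `s` are monomials. Finally `c = λ ^ k` is read off from
`(a y ^ k)(λ y) = λ ^ k a y ^ k`.
-/

open scoped Polynomial

namespace Polynomial

variable {R : Type*} [CommRing R] [IsDomain R]

lemma degree_comp_C_mul_X {r : R} (hr : r ≠ 0) (p : R[X]) :
    (p.comp (C r * X)).degree = p.degree := by
  rw [degree_comp (by simp [degree_C_mul_X hr]), degree_C_mul_X hr, mul_one]

lemma eq_C_mul_X_pow_of_associated_comp_C_mul_X {r : R}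
    (hr : Function.Injective (r ^ · : ℕ → R)) {p : R[X]}
    (h : Associated p (p.comp (C r * X))) :
    p = C p.leadingCoeff * X ^ p.natDegree := by
  obtain ⟨u, hu⟩ := h
  obtain ⟨e, -, he⟩ := isUnit_iff.mp u.isUnit
  have hcoeff : ∀ i, p.coeff i * r ^ i = p.coeff i * e := fun i => by
    rw [← comp_C_mul_X_coeff, ← hu, ← he, coeff_mul_C]
  ext i
  rw [coeff_C_mul_X_pow]
  split_ifs with hi
  · rw [hi, leadingCoeff]
  · by_contra hpi
    have hlead : p.leadingCoeff ≠ 0 := leadingCoeff_ne_zero.mpr (by rintro rfl; simp at hpi)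
    exact hi (hr ((mul_left_cancel₀ hpi (hcoeff i)).trans
      (mul_left_cancel₀ hlead (hcoeff p.natDegree)).symm))

end Polynomial

lemma injective_pow_zpow_of_pow_ne_one {G₀ : Type*} [GroupWithZero G₀] {q : G₀} (hq0 : q ≠ 0)
    (hqu : ∀ n : ℕ, 0 < n → q ^ n ≠ 1) {ℓ : ℤ} (hℓ : ℓ ≠ 0) :
    Function.Injective ((q ^ ℓ) ^ · : ℕ → G₀) := by
  intro n m hnm
  have hq : ¬IsOfFinOrder (Units.mk0 q hq0) := by
    rw [← orderOf_eq_zero_iff, ← orderOf_units, orderOf_eq_zero_iff']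
    exact hqu
  have := injective_zpow_iff_not_isOfFinOrder.mpr hq (a₁ := ℓ * n) (a₂ := ℓ * m)
    (by simpa [Units.ext_iff, zpow_mul] using hnm)
  exact_mod_cast mul_left_cancel₀ hℓ this

namespace RatFunc

variable {K : Type*} [Field K]

lemma zpow_apply_X {σ : K⟮X⟯ ≃ₐ[K] K⟮X⟯} {q : K} (hq : q ≠ 0) (hσ : σ X = C q * X) (m : ℤ) :
    (σ ^ m) X = C (q ^ m) * X := by
  have hC (τ : K⟮X⟯ ≃ₐ[K] K⟮X⟯) (a : K) : τ (C a) = C a := by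
    rw [← algebraMap_eq_C, τ.commutes]
  have hσinv : σ⁻¹ X = C q⁻¹ * X := by
    rw [AlgEquiv.aut_inv, AlgEquiv.symm_apply_eq, map_mul, hC, hσ, ← mul_assoc, ← map_mul,
      inv_mul_cancel₀ hq, map_one, one_mul]
  induction m using Int.induction_on with
  | zero => simp
  | succ k ih =>
    rw [zpow_add_one, AlgEquiv.mul_apply, hσ, map_mul, hC, ih, zpow_add_one₀ hq, map_mul]
    ring
  | pred k ih =>
    rw [zpow_sub_one, AlgEquiv.mul_apply, hσinv, map_mul, hC, ih, zpow_sub_one₀ hq, map_mul]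
    ring

lemma map_algebraMap_eq_algebraMap_comp {τ : K⟮X⟯ →ₐ[K] K⟮X⟯} {r : K} (hτ : τ X = C r * X)
    (p : K[X]) :
    τ (algebraMap K[X] K⟮X⟯ p) =
      algebraMap K[X] K⟮X⟯ (p.comp (Polynomial.C r * Polynomial.X)) := by
  rw [← aeval_X_left_eq_algebraMap, ← aeval_X_left_eq_algebraMap,
    ← Polynomial.aeval_algHom_apply, hτ, Polynomial.aeval_comp]
  simp

theorem exists_eq_C_mul_X_zpow_of_map_eq_C_mul {τ : K⟮X⟯ →ₐ[K] K⟮X⟯} {r : K}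
    (hr : Function.Injective (r ^ · : ℕ → K)) (hτ : τ X = C r * X) {f : K⟮X⟯} {c : K}
    (hf : τ f = C c * f) : ∃ (k : ℤ) (a : K), f = C a * X ^ k := by
  have hr0 : r ≠ 0 := by
    rintro rfl
    exact absurd (hr (a₁ := 1) (a₂ := 2) (by simp)) (by decide)
  set S : K[X] →+* K[X] := Polynomial.compRingHom (Polynomial.C r * Polynomial.X)
  have hcop : IsCoprime f.num f.denom := f.isCoprime_num_denom
  have hSs : S f.denom ≠ 0 := by
    simpa [S, Polynomial.comp_C_mul_X_eq_zero_iff (mem_nonZeroDivisors_of_ne_zero hr0)]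
      using f.denom_ne_zero
  have hcross : S f.num * f.denom = f.num * (Polynomial.C c * S f.denom) := by
    apply IsFractionRing.injective K[X] K⟮X⟯
    rw [← num_div_denom f, map_div₀, map_algebraMap_eq_algebraMap_comp hτ,
      map_algebraMap_eq_algebraMap_comp hτ, mul_div_assoc'] at hf
    have := (div_eq_div_iff (algebraMap_ne_zero hSs) (algebraMap_ne_zero f.denom_ne_zero)).mp hf
    simp only [map_mul, algebraMap_C, S, Polynomial.coe_compRingHom_apply] at this ⊢
    linear_combination this
  have hnum := Polynomial.eq_C_mul_X_pow_of_associated_comp_C_mul_X hr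
    (Polynomial.associated_of_dvd_of_degree_eq (hcop.dvd_of_dvd_mul_right ⟨_, hcross⟩)
      (Polynomial.degree_comp_C_mul_X hr0 f.num).symm)
  have hdenom := Polynomial.eq_C_mul_X_pow_of_associated_comp_C_mul_X hr
    (Polynomial.associated_of_dvd_of_degree_eq
      ((hcop.map S).symm.dvd_of_dvd_mul_left ⟨f.num * Polynomial.C c, by rw [hcross]; ring⟩)
      (Polynomial.degree_comp_C_mul_X hr0 f.denom)).symm
  refine ⟨f.num.natDegree - f.denom.natDegree, f.num.leadingCoeff / f.denom.leadingCoeff, ?_⟩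
  conv_lhs => rw [← num_div_denom f, hnum, hdenom]
  rw [map_div₀, zpow_sub₀ X_ne_zero, zpow_natCast, zpow_natCast, div_mul_div_comm]
  simp only [map_mul, map_pow, algebraMap_C, algebraMap_X]

end RatFunc

theorem stmt1_general (F : Type*) [Field F] (q : F) (hq0 : q ≠ 0)
    (hqu : ∀ n : ℕ, 0 < n → q ^ n ≠ 1)
    (σ : RatFunc F ≃ₐ[F] RatFunc F) (hσ : σ RatFunc.X = RatFunc.C q * RatFunc.X)
    (f : RatFunc F) (hf : f ≠ 0) (ℓ : ℤ) (hℓ : ℓ ≠ 0) (c : F)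
    (h : (σ ^ ℓ) f = RatFunc.C c * f) :
    ∃ k : ℤ, (∃ a : F, f = RatFunc.C a * RatFunc.X ^ k) ∧ c = q ^ (ℓ * k) := by
  have hX : (σ ^ ℓ) RatFunc.X = RatFunc.C (q ^ ℓ) * RatFunc.X := RatFunc.zpow_apply_X hq0 hσ ℓ
  obtain ⟨k, a, rfl⟩ := RatFunc.exists_eq_C_mul_X_zpow_of_map_eq_C_mul (τ := (σ ^ ℓ).toAlgHom)
    (injective_pow_zpow_of_pow_ne_one hq0 hqu hℓ) hX h
  refine ⟨k, ⟨a, rfl⟩, RatFunc.C_injective (mul_right_cancel₀ hf ?_)⟩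
  rw [← h, map_mul, map_zpow₀, hX, ← RatFunc.algebraMap_eq_C, AlgEquiv.commutes, mul_zpow,
    zpow_mul, RatFunc.algebraMap_eq_C, ← map_zpow₀]
  ring

/-- If a nonzero rational function satisfies `f(q^ℓ y) = c f(y)` for some nonzero
integer `ℓ`, then `f = a · y^k` for some integer `k`, and `c = q^{ℓ k}`. -/
theorem stmt1 (F : Type*) [Field F] [CharZero F] (q : F) (hq0 : q ≠ 0)
    (hqu : ∀ n : ℕ, 0 < n → q ^ n ≠ 1)
    (σ : RatFunc F ≃ₐ[F] RatFunc F) (hσ : σ RatFunc.X = RatFunc.C q * RatFunc.X)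
    (f : RatFunc F) (hf : f ≠ 0) (ℓ : ℤ) (hℓ : ℓ ≠ 0) (c : F)
    (h : (σ ^ ℓ) f = RatFunc.C c * f) :
    ∃ k : ℤ, (∃ a : F, f = RatFunc.C a * RatFunc.X ^ k) ∧ c = q ^ (ℓ * k) :=
  stmt1_general F q hq0 hqu σ hσ f hf ℓ hℓ c h
end

section
/- Let σ be a degree-preserving F-algebra automorphism of F[y] and let p ∈ F[y] be a nonzero σ-special polynomial. Then every factor of p is σ-special: if b | p, then b | σ^ℓ(b) for some nonzero integer ℓ. -/
open Polynomial UniqueFactorizationMonoid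

/-- Any factor of a nonzero σ-special polynomial is σ-special. -/
theorem stmt8 (F : Type*) [Field F] [CharZero F]
    (σ : Polynomial F ≃ₐ[F] Polynomial F)
    (hdeg : ∀ p : Polynomial F, (σ p).degree = p.degree)
    (p : Polynomial F) (hp : p ≠ 0)
    (hsp : ∃ ℓ : ℤ, ℓ ≠ 0 ∧ p ∣ (σ ^ ℓ) p)
    (b : Polynomial F) (hb : b ∣ p) :
    ∃ ℓ : ℤ, ℓ ≠ 0 ∧ b ∣ (σ ^ ℓ) b := by
  classical
  obtain ⟨ℓ, hℓ, hdvd⟩ := hsp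
  -- degree preservation for natural powers
  have hdegn : ∀ (n : ℕ) (q : Polynomial F), ((σ ^ n) q).degree = q.degree := by
    intro n
    induction n with
    | zero => intro q; simp
    | succ n ih =>
      intro q
      rw [pow_succ, AlgEquiv.mul_apply, ih, hdeg]
  -- degree preservation for integer powers
  have hdegz : ∀ (m : ℤ) (q : Polynomial F), ((σ ^ m) q).degree = q.degree := by
    intro m q
    rcases m with n | n
    · simpa using hdegn n q
    · have h1 : (σ ^ (Int.negSucc n)) = (σ ^ (n + 1))⁻¹ := zpow_negSucc σ n
      rw [h1]
      have h2 := hdegn (n + 1) ((σ ^ (n + 1))⁻¹ q)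
      rw [show (σ ^ (n + 1)) ((σ ^ (n + 1))⁻¹ q) = q from by
        rw [← AlgEquiv.mul_apply, mul_inv_cancel, AlgEquiv.one_apply]] at h2
      exact h2.symm
  have hne : ∀ (m : ℤ) (q : Polynomial F), q ≠ 0 → (σ ^ m) q ≠ 0 := by
    intro m q hq h
    exact hq ((σ ^ m).injective (by simpa using h))
  -- σ^ℓ p is associated to p
  obtain ⟨c, hc⟩ := hdvd
  have hσp : (σ ^ ℓ) p ≠ 0 := hne ℓ p hp
  have hcne : c ≠ 0 := by rintro rfl; rw [mul_zero] at hc; exact hσp hc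
  have hcdeg : c.natDegree = 0 := by
    have h1 : ((σ ^ ℓ) p).natDegree = p.natDegree :=
      natDegree_eq_of_degree_eq (hdegz ℓ p)
    rw [hc, natDegree_mul hp hcne] at h1
    omega
  have hcu : IsUnit c := by
    rcases Polynomial.natDegree_eq_zero.mp hcdeg with ⟨a, rfl⟩
    exact isUnit_C.mpr (isUnit_iff_ne_zero.mpr (by simpa using hcne))
  have hassoc : Associated p ((σ ^ ℓ) p) := by
    rw [hc]; exact ⟨hcu.unit, by rw [IsUnit.unit_spec]⟩
  -- iterate
  have hassock : ∀ k : ℕ, Associated p ((σ ^ (ℓ * k)) p) := by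
    intro k
    induction k with
    | zero => simpa using Associated.refl p
    | succ k ih =>
      have hstep : Associated ((σ ^ (ℓ * k)) p) ((σ ^ (ℓ * k)) ((σ ^ ℓ) p)) :=
        hassoc.map ((σ ^ (ℓ * k)) : Polynomial F ≃ₐ[F] Polynomial F).toAlgHom.toRingHom.toMonoidHom
      have heq : (σ ^ (ℓ * (k + 1 : ℕ))) p = (σ ^ (ℓ * k)) ((σ ^ ℓ) p) := by
        rw [← AlgEquiv.mul_apply, ← zpow_add]
        congr 1
        push_cast
        ring
      rw [heq]
      exact ih.trans hstep
  have hbne : b ≠ 0 := by rintro rfl; exact hp (zero_dvd_iff.mp hb)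
  have hbkne : ∀ k : ℕ, (σ ^ (ℓ * k)) b ≠ 0 := fun k => hne _ _ hbne
  have hdvdk : ∀ k : ℕ, (σ ^ (ℓ * k)) b ∣ p := by
    intro k
    have h1 : (σ ^ (ℓ * k)) b ∣ (σ ^ (ℓ * k)) p :=
      map_dvd ((σ ^ (ℓ * k)) : Polynomial F ≃ₐ[F] Polynomial F).toAlgHom.toRingHom hb
    exact h1.trans (hassock k).symm.dvd
  -- pigeonhole on normalized factors
  let f : ℕ → {s : Multiset (Polynomial F) // s ∈ (normalizedFactors p).powerset.toFinset} :=
    fun k => ⟨normalizedFactors ((σ ^ (ℓ * k)) b), by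
      rw [Multiset.mem_toFinset, Multiset.mem_powerset]
      exact (dvd_iff_normalizedFactors_le_normalizedFactors (hbkne k) hp).mp (hdvdk k)⟩
  obtain ⟨i, j, hij, hfij⟩ := Finite.exists_ne_map_eq_of_infinite f
  -- wlog i < j
  wlog hlt : i < j generalizing i j
  · exact this j i hij.symm hfij.symm (by omega)
  have hassocij : Associated ((σ ^ (ℓ * i)) b) ((σ ^ (ℓ * j)) b) := by
    rw [associated_iff_normalizedFactors_eq_normalizedFactors (hbkne i) (hbkne j)]
    exact congrArg Subtype.val hfij
  -- shift back by σ^{-(ℓ i)}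
  have hfinal : Associated b ((σ ^ (ℓ * ((j : ℤ) - i))) b) := by
    have h1 := hassocij.map
      ((σ ^ (-(ℓ * i))) : Polynomial F ≃ₐ[F] Polynomial F).toAlgHom.toRingHom.toMonoidHom
    have h2 : (σ ^ (-(ℓ * (i : ℤ)))) ((σ ^ (ℓ * (i : ℤ))) b) = b := by
      rw [← AlgEquiv.mul_apply, ← zpow_add]
      simp
    have h3 : (σ ^ (-(ℓ * (i : ℤ)))) ((σ ^ (ℓ * (j : ℤ))) b) = (σ ^ (ℓ * ((j : ℤ) - i))) b := by
      rw [← AlgEquiv.mul_apply, ← zpow_add]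
      congr 1
      ring
    have h1' : Associated ((σ ^ (-(ℓ * (i : ℤ)))) ((σ ^ (ℓ * (i : ℤ))) b))
        ((σ ^ (-(ℓ * (i : ℤ)))) ((σ ^ (ℓ * (j : ℤ))) b)) := h1
    rw [h2, h3] at h1'
    exact h1'
  refine ⟨ℓ * ((j : ℤ) - i), ?_, hfinal.dvd⟩
  have : (j : ℤ) - i ≠ 0 := by omega
  exact mul_ne_zero hℓ this
end

section
/- Let σ be the q-shift y ↦ qy on F(y), where F has characteristic zero and q is neither zero nor a root of unity. Let K = u/v ∈ F(y) be σ-standard with gcd(u,v) = 1, i.e., σ-reduced and u(0)q^ℓ − v(0) ≠ 0 for every negative integer ℓ. If g ∈ F(y) and p := u·σ(g) − v·g is a polynomial in F[y], then g ∈ F[y]. -/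
/-!
Write `g = a / b` in lowest terms. Clearing denominators in `u σ(g) - v g = p` gives
`b ∣ v τ(b)` and `τ(b) ∣ u b`.

If `X ∣ b`, say `b = X^k c` with `c(0) ≠ 0` and `k > 0`, then `τ(b) = q^k X^k τ(c)`;
cancelling `X^k` and evaluating at `0` yields `u(0) = q^k v(0)`, which σ-standardness excludes.

Otherwise, if `b` is not a unit, it has a prime factor `w` with `w(0) ≠ 0`. Comparing the constant
and leading coefficients of `τ^m w = w(q^m X)` shows that, as `q` is not a root of unity, the
primes `τ^m w` are pairwise non-associated, so only finitely many divide `b`. If `τ^M w` and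
`τ^N w` are the extreme ones, then `τ^(M+1) w ∣ τ(b) ∣ u b` forces `τ^(M+1) w ∣ u`, and
`τ^N w ∣ b ∣ v τ(b)` forces `τ^N w ∣ v`; so `u` and `τ^(M+1-N) v` share a prime factor,
contradicting σ-reducedness.
-/

open Polynomial

theorem UniqueFactorizationMonoid.finite_setOf_dvd {α ι : Type*} [CommMonoidWithZero α]
    [UniqueFactorizationMonoid α] {b : α} (hb : b ≠ 0) {f : ι → α}
    (hf : ∀ i, Irreducible (f i)) (hinj : ∀ i j, Associated (f i) (f j) → i = j) :
    {i | f i ∣ b}.Finite := by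
  classical
  refine ((factors b).toFinset.finite_toSet.biUnion (t := fun r => {i | Associated (f i) r})
    fun r _ => ?_).subset fun i hi => ?_
  · exact Set.Subsingleton.finite fun i hi j hj => hinj i j (hi.trans hj.symm)
  · obtain ⟨r, hr, hir⟩ := exists_mem_factors_of_dvd hb (hf i) hi
    exact Set.mem_biUnion (Multiset.mem_toFinset.mpr hr) hir

theorem zpow_injective_of_pow_ne_one {G₀ : Type*} [GroupWithZero G₀] {q : G₀} (hq0 : q ≠ 0)
    (hqu : ∀ n : ℕ, 0 < n → q ^ n ≠ 1) : Function.Injective (q ^ · : ℤ → G₀) := by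
  intro m n h
  have h1 : q ^ (m - n) = 1 := by
    simp only at h; rw [zpow_sub₀ hq0, h, div_self (zpow_ne_zero _ hq0)]
  have h2 : q ^ (m - n).natAbs = 1 := by
    rcases Int.natAbs_eq (m - n) with h | h <;> rw [h] at h1
    · exact_mod_cast h1
    · rwa [zpow_neg, inv_eq_one, zpow_natCast] at h1
  by_contra hmn
  exact hqu _ (Int.natAbs_pos.mpr (sub_ne_zero.mpr hmn)) h2

theorem Polynomial.pow_natDegree_eq_of_associated_comp {R : Type*} [CommRing R] [IsDomain R]
    {w : R[X]} (hw0 : w.coeff 0 ≠ 0) {s t : R}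
    (h : Associated (w.comp (C s * X)) (w.comp (C t * X))) :
    s ^ w.natDegree = t ^ w.natDegree := by
  obtain ⟨c, hc⟩ := h
  obtain ⟨r, -, hr⟩ := Polynomial.isUnit_iff.mp c.isUnit
  have hcoeff (n : ℕ) : w.coeff n * s ^ n * r = w.coeff n * t ^ n := by
    simpa [← hr] using congrArg (coeff · n) hc
  have hr1 : r = 1 := by simpa [hw0] using hcoeff 0
  have hlead : w.leadingCoeff ≠ 0 := leadingCoeff_ne_zero.mpr (fun h => hw0 (by simp [h]))
  simpa [hr1, hlead] using hcoeff w.natDegree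

namespace QShift

variable {F : Type*} [Field F] {q : F} {τ : F[X] ≃ₐ[F] F[X]}

theorem apply_eq_comp (hτ : τ X = C q * X) (f : F[X]) : τ f = f.comp (C q * X) := by
  rw [comp_eq_aeval, ← hτ, aeval_algHom_apply, aeval_X_left_apply]

theorem zpow_apply_X (hq0 : q ≠ 0) (hτ : τ X = C q * X) (m : ℤ) :
    (τ ^ m) X = C (q ^ m) * X := by
  have hC (ρ : F[X] ≃ₐ[F] F[X]) (c : F) : ρ (C c) = C c := ρ.commutes c
  induction m using Int.induction_on with
  | zero => simp
  | succ k ih =>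
    rw [zpow_add_one, AlgEquiv.mul_apply, hτ, map_mul, ih, hC, ← mul_assoc, ← C_mul,
      zpow_add_one₀ hq0, mul_comm q]
  | pred k ih =>
    have h := congrArg (τ ^ (-(k : ℤ) - 1)) hτ
    rw [← AlgEquiv.mul_apply, ← zpow_add_one, sub_add_cancel, ih, map_mul, hC] at h
    apply mul_left_cancel₀ (C_ne_zero.mpr hq0)
    rw [← h, ← mul_assoc, ← C_mul, zpow_sub_one₀ hq0, mul_comm (q ^ _), ← mul_assoc,
      mul_inv_cancel₀ hq0, one_mul]

theorem zpow_apply_eq_comp (hq0 : q ≠ 0) (hτ : τ X = C q * X) (m : ℤ) (f : F[X]) :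
    (τ ^ m) f = f.comp (C (q ^ m) * X) :=
  apply_eq_comp (zpow_apply_X hq0 hτ m) f

theorem eval_zero_apply (hτ : τ X = C q * X) (f : F[X]) : (τ f).eval 0 = f.eval 0 := by
  simp [apply_eq_comp hτ, eval_comp]

theorem eq_of_associated_zpow_apply (hq0 : q ≠ 0) (hqu : ∀ n : ℕ, 0 < n → q ^ n ≠ 1)
    (hτ : τ X = C q * X) {w : F[X]} (hw0 : w.coeff 0 ≠ 0) (hwd : 0 < w.natDegree) {m n : ℤ}
    (h : Associated ((τ ^ m) w) ((τ ^ n) w)) : m = n := by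
  rw [zpow_apply_eq_comp hq0 hτ, zpow_apply_eq_comp hq0 hτ] at h
  have h' := pow_natDegree_eq_of_associated_comp hw0 h
  rw [← zpow_natCast, ← zpow_natCast, ← zpow_mul, ← zpow_mul] at h'
  exact mul_right_cancel₀ (by omega) (zpow_injective_of_pow_ne_one hq0 hqu h')

theorem exists_eval_zero_eq_pow_mul (hτ : τ X = C q * X) {u v a b p : F[X]}
    (hkey : u * τ a * b - v * a * τ b = p * (b * τ b)) (hab : IsCoprime a b) (hb0 : b ≠ 0)
    (hXb : X ∣ b) : ∃ k : ℕ, 0 < k ∧ u.eval 0 = q ^ k * v.eval 0 := by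
  obtain ⟨c, hbc, hXc⟩ := b.exists_eq_pow_rootMultiplicity_mul_and_not_dvd hb0 0
  set k := b.rootMultiplicity 0
  simp only [C_0, sub_zero] at hbc hXc
  have hk : 0 < k := by
    by_contra hk
    rw [Nat.eq_zero_of_not_pos hk, pow_zero, one_mul] at hbc
    exact hXc (hbc ▸ hXb)
  have ha0 : a.eval 0 ≠ 0 := fun h =>
    not_isUnit_X (hab.isUnit_of_dvd' (X_dvd_iff.mpr (by rwa [coeff_zero_eq_eval_zero])) hXb)
  have hc0 : c.eval 0 ≠ 0 := fun h => hXc (X_dvd_iff.mpr (by rwa [coeff_zero_eq_eval_zero]))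
  have hτb : τ b = X ^ k * (C (q ^ k) * τ c) := by
    rw [hbc, map_mul, map_pow, hτ, mul_pow, C_pow]; ring
  have hcancel :
      u * τ a * c - v * a * (C (q ^ k) * τ c) = p * (c * X ^ k * (C (q ^ k) * τ c)) := by
    rw [hτb, hbc] at hkey
    exact mul_left_cancel₀ (pow_ne_zero k X_ne_zero) (by linear_combination hkey)
  have h0 : (u.eval 0 - q ^ k * v.eval 0) * (a.eval 0 * c.eval 0) = 0 := by
    have h := congrArg (eval 0) hcancel
    simp only [eval_sub, eval_mul, eval_pow, eval_X, eval_C, eval_zero_apply hτ,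
      zero_pow hk.ne', mul_zero, zero_mul] at h
    linear_combination h
  exact ⟨k, hk, sub_eq_zero.mp ((mul_eq_zero.mp h0).resolve_right (mul_ne_zero ha0 hc0))⟩

end QShift

theorem AlgEquiv.exists_not_isCoprime_zpow_apply {R A : Type*} [CommRing R] [CommRing A]
    [UniqueFactorizationMonoid A] [Algebra R A] {τ : A ≃ₐ[R] A} {u v b w : A} (hb0 : b ≠ 0)
    (hw : Prime w) (hwb : w ∣ b)
    (horbit : ∀ m n : ℤ, Associated ((τ ^ m) w) ((τ ^ n) w) → m = n)
    (hvb : b ∣ v * τ b) (hub : τ b ∣ u * b) :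
    ∃ ℓ : ℤ, ℓ ≠ 0 ∧ ¬IsCoprime u ((τ ^ ℓ) v) := by
  set S := {m : ℤ | (τ ^ m) w ∣ b}
  have hprime (m : ℤ) : Prime ((τ ^ m) w) := (MulEquiv.prime_iff (τ ^ m)).mpr hw
  have hS : S.Finite :=
    UniqueFactorizationMonoid.finite_setOf_dvd hb0 (fun m => (hprime m).irreducible) horbit
  have h0 : (0 : ℤ) ∈ S := by simpa [S] using hwb
  obtain ⟨M, hM, hMmax⟩ := Set.exists_max_image S id hS ⟨0, h0⟩
  obtain ⟨N, hN, hNmin⟩ := Set.exists_min_image S id hS ⟨0, h0⟩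
  have hshift (k m : ℤ) {x : A} (h : (τ ^ m) w ∣ x) : (τ ^ (k + m)) w ∣ (τ ^ k) x := by
    rw [zpow_add, AlgEquiv.mul_apply]
    exact map_dvd _ h
  have huM : (τ ^ (1 + M)) w ∣ u := by
    have h : (τ ^ (1 + M)) w ∣ u * b := by simpa using (hshift 1 M hM).trans hub
    exact ((hprime _).dvd_or_dvd h).resolve_right fun h => by simpa using hMmax _ h
  have hvN : (τ ^ N) w ∣ v := by
    refine ((hprime N).dvd_or_dvd (hN.trans hvb)).resolve_right fun h => ?_
    have h' := hshift (-1) N h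
    rw [zpow_neg_one, ← AlgEquiv.mul_apply, inv_mul_cancel, AlgEquiv.one_apply] at h'
    simpa using hNmin _ h'
  have hNM : N ≤ M := hMmax N hN
  have hvM : (τ ^ (1 + M)) w ∣ (τ ^ (1 + M - N)) v := by simpa using hshift (1 + M - N) N hvN
  exact ⟨1 + M - N, by omega, fun hcop => (hprime _).not_isUnit (hcop.isUnit_of_dvd' huM hvM)⟩

theorem IsCoprime.dvd_mul_of_mul_sub_mul_eq {A : Type*} [CommRing A] {a b a' b' u v p : A}
    (hab : IsCoprime a b) (hab' : IsCoprime a' b')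
    (h : u * a' * b - v * a * b' = p * (b * b')) :
    b ∣ v * b' ∧ b' ∣ u * b :=
  ⟨hab.symm.dvd_of_dvd_mul_right ⟨u * a' - p * b', by linear_combination -h⟩,
    hab'.symm.dvd_of_dvd_mul_right ⟨p * b + v * a, by linear_combination h⟩⟩

theorem RatFunc.num_denom_of_mul_sub_eq_algebraMap {F : Type*} [Field F]
    {τ : F[X] ≃ₐ[F] F[X]} {σ : RatFunc F ≃ₐ[F] RatFunc F}
    (hcompat : ∀ f : F[X],
      σ (algebraMap F[X] (RatFunc F) f) = algebraMap F[X] (RatFunc F) (τ f))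
    {u v p : F[X]} {g : RatFunc F}
    (hp : algebraMap F[X] (RatFunc F) u * σ g - algebraMap F[X] (RatFunc F) v * g =
      algebraMap F[X] (RatFunc F) p) :
    u * τ g.num * g.denom - v * g.num * τ g.denom = p * (g.denom * τ g.denom) := by
  set a := g.num
  set b := g.denom
  have hg : g = algebraMap F[X] (RatFunc F) a / algebraMap F[X] (RatFunc F) b :=
    g.num_div_denom.symm
  have hb : algebraMap F[X] (RatFunc F) b ≠ 0 := RatFunc.algebraMap_ne_zero g.denom_ne_zero
  have hτb : algebraMap F[X] (RatFunc F) (τ b) ≠ 0 :=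
    RatFunc.algebraMap_ne_zero ((map_ne_zero_iff τ τ.injective).mpr g.denom_ne_zero)
  rw [hg, map_div₀, hcompat, hcompat] at hp
  field_simp at hp
  apply RatFunc.algebraMap_injective F
  simp only [map_sub, map_mul]
  linear_combination hp

theorem stmt13_general (F : Type*) [Field F] (q : F) (hq0 : q ≠ 0)
    (hqu : ∀ n : ℕ, 0 < n → q ^ n ≠ 1)
    (τ : Polynomial F ≃ₐ[F] Polynomial F)
    (hτ : τ Polynomial.X = Polynomial.C q * Polynomial.X)
    (σ : RatFunc F ≃ₐ[F] RatFunc F)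
    (hcompat : ∀ p : Polynomial F,
      σ (algebraMap (Polynomial F) (RatFunc F) p) =
        algebraMap (Polynomial F) (RatFunc F) (τ p))
    (u v : Polynomial F)
    (hred : ∀ ℓ : ℤ, ℓ ≠ 0 → IsCoprime u ((τ ^ ℓ) v))
    (hstd : ∀ ℓ : ℤ, ℓ < 0 → u.eval 0 * q ^ ℓ ≠ v.eval 0)
    (g : RatFunc F) (p : Polynomial F)
    (hp : algebraMap (Polynomial F) (RatFunc F) u * σ g -
        algebraMap (Polynomial F) (RatFunc F) v * g =
      algebraMap (Polynomial F) (RatFunc F) p) :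
    ∃ g' : Polynomial F, g = algebraMap (Polynomial F) (RatFunc F) g' := by
  have hkey := RatFunc.num_denom_of_mul_sub_eq_algebraMap hcompat hp
  have hab := g.isCoprime_num_denom
  obtain ⟨hvb, hub⟩ := hab.dvd_mul_of_mul_sub_mul_eq (hab.map τ.toRingHom) hkey
  have hXb : ¬X ∣ g.denom := fun hXb => by
    obtain ⟨k, hk, hk0⟩ := QShift.exists_eval_zero_eq_pow_mul hτ hkey hab g.denom_ne_zero hXb
    refine hstd (-k) (by omega) ?_
    rw [hk0, zpow_neg, zpow_natCast, mul_comm, inv_mul_cancel_left₀ (pow_ne_zero k hq0)]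
  have hunit : IsUnit g.denom := by
    by_contra hnu
    obtain ⟨w, hw, hwb⟩ := WfDvdMonoid.exists_irreducible_factor hnu g.denom_ne_zero
    have hw0 : w.coeff 0 ≠ 0 := fun h => hXb ((X_dvd_iff.mpr h).trans hwb)
    have hwd : 0 < w.natDegree :=
      natDegree_pos_iff_degree_pos.mpr (degree_pos_of_irreducible hw)
    have horbit (m n : ℤ) (h : Associated ((τ ^ m) w) ((τ ^ n) w)) : m = n :=
      QShift.eq_of_associated_zpow_apply hq0 hqu hτ hw0 hwd h
    obtain ⟨ℓ, hℓ, hnc⟩ :=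
      AlgEquiv.exists_not_isCoprime_zpow_apply g.denom_ne_zero hw.prime hwb horbit hvb hub
    exact hnc (hred ℓ hℓ)
  refine ⟨g.num, ?_⟩
  conv_lhs => rw [← g.num_div_denom, g.monic_denom.eq_one_of_isUnit hunit, map_one, div_one]

/-- q-shift case: if `K = u/v` is σ-standard and `u·σ(g) − v·g` is a polynomial
for some rational function `g`, then `g` is a polynomial. -/
theorem stmt13 (F : Type*) [Field F] [CharZero F] (q : F) (hq0 : q ≠ 0)
    (hqu : ∀ n : ℕ, 0 < n → q ^ n ≠ 1)
    (τ : Polynomial F ≃ₐ[F] Polynomial F)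
    (hτ : τ Polynomial.X = Polynomial.C q * Polynomial.X)
    (σ : RatFunc F ≃ₐ[F] RatFunc F)
    (hcompat : ∀ p : Polynomial F,
      σ (algebraMap (Polynomial F) (RatFunc F) p) =
        algebraMap (Polynomial F) (RatFunc F) (τ p))
    (u v : Polynomial F) (hv : v ≠ 0) (hcop : IsCoprime u v)
    (hred : ∀ ℓ : ℤ, ℓ ≠ 0 → IsCoprime u ((τ ^ ℓ) v))
    (hstd : ∀ ℓ : ℤ, ℓ < 0 → u.eval 0 * q ^ ℓ ≠ v.eval 0)
    (g : RatFunc F) (p : Polynomial F)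
    (hp : algebraMap (Polynomial F) (RatFunc F) u * σ g -
        algebraMap (Polynomial F) (RatFunc F) v * g =
      algebraMap (Polynomial F) (RatFunc F) p) :
    ∃ g' : Polynomial F, g = algebraMap (Polynomial F) (RatFunc F) g' :=
  stmt13_general F q hq0 hqu τ hτ σ hcompat u v hred hstd g p hp
end

section
/- Let σ be the shift y ↦ y+1 on F(y) (F of characteristic zero), let K = u/v ∈ F(y) be σ-reduced with K ≠ 1, and define the F-linear map φ_K : F[y] → F[y] by φ_K(p) = u·σ(p) − v·p. Then φ_K is injective. -/
/-!
If `u · τ w = v · w` with `w ≠ 0`, comparing degrees and leading coefficients (which `τ`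
preserves) gives `deg u = deg v` and `lc u = lc v`, so `u = v` as soon as `u` is constant.
Otherwise `v`, being coprime to `u`, divides `τ w`; writing `τ w = v · w₁` gives `w = u · w₁`
and `τ u · τ w₁ = v · w₁`, an equation of the same shape with `u` replaced by `τ u` and a
solution of smaller degree. σ-reducedness keeps every `τ ^ k u` coprime to `v`, so the step can
be repeated and the degree of the solution would decrease forever.
-/

open Polynomial

namespace Polynomial

variable {F : Type*} [Field F] {τ : F[X] ≃ₐ[F] F[X]}

theorem shift_apply_eq_comp (hτ : τ X = X + 1) (p : F[X]) : τ p = p.comp (X + 1) := by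
  have h : (τ : F[X] →ₐ[F] F[X]) = aeval (X + 1 : F[X]) := algHom_ext (by simpa using hτ)
  simpa [comp_eq_aeval] using DFunLike.congr_fun h p

theorem isMonicOfDegree_X_add_one_one : IsMonicOfDegree (X + 1 : F[X]) 1 := by
  simpa using isMonicOfDegree_X_add_one (1 : F)

theorem natDegree_shift_apply (hτ : τ X = X + 1) (p : F[X]) : (τ p).natDegree = p.natDegree := by
  rw [shift_apply_eq_comp hτ, natDegree_comp, isMonicOfDegree_X_add_one_one.natDegree_eq, mul_one]

theorem leadingCoeff_shift_apply (hτ : τ X = X + 1) (p : F[X]) :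
    (τ p).leadingCoeff = p.leadingCoeff := by
  rcases eq_or_ne p.natDegree 0 with hp | hp
  · rw [eq_C_of_natDegree_eq_zero hp, ← algebraMap_eq, AlgEquiv.commutes]
  · have hX := isMonicOfDegree_X_add_one_one (F := F)
    rw [shift_apply_eq_comp hτ, leadingCoeff_comp (by rw [hX.natDegree_eq]; exact one_ne_zero),
      hX.leadingCoeff_eq, one_pow, mul_one]

theorem natDegree_shift_pow_apply (hτ : τ X = X + 1) (k : ℕ) (p : F[X]) :
    ((τ ^ k) p).natDegree = p.natDegree := by
  induction k with
  | zero => rfl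
  | succ k ih => rw [pow_succ', AlgEquiv.mul_apply, natDegree_shift_apply hτ, ih]

theorem natDegree_eq_of_mul_shift_eq (hτ : τ X = X + 1) {a b w : F[X]} (hw : w ≠ 0)
    (h : a * τ w = b * w) : a.natDegree = b.natDegree := by
  rcases eq_or_ne a 0 with rfl | ha
  · rw [zero_mul, eq_comm, mul_eq_zero] at h
    simp [h.resolve_right hw]
  have hb : b ≠ 0 := by rintro rfl; simp [ha, hw] at h
  have := congrArg natDegree h
  rwa [natDegree_mul ha (by simpa using hw), natDegree_mul hb hw, natDegree_shift_apply hτ,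
    add_left_inj] at this

theorem leadingCoeff_eq_of_mul_shift_eq (hτ : τ X = X + 1) {a b w : F[X]} (hw : w ≠ 0)
    (h : a * τ w = b * w) : a.leadingCoeff = b.leadingCoeff := by
  have := congrArg leadingCoeff h
  rwa [leadingCoeff_mul, leadingCoeff_mul, leadingCoeff_shift_apply hτ,
    mul_left_inj' (leadingCoeff_ne_zero.mpr hw)] at this

theorem isCoprime_pow_apply_left {u v : F[X]} (hcop : IsCoprime u v)
    (hred : ∀ ℓ : ℤ, ℓ ≠ 0 → IsCoprime u ((τ ^ ℓ) v)) (k : ℕ) :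
    IsCoprime ((τ ^ k) u) v := by
  rcases Nat.eq_zero_or_pos k with rfl | hk
  · exact hcop
  have h := (hred (-k) (by omega)).map ((τ ^ k : F[X] ≃ₐ[F] F[X]) : F[X] →+* F[X])
  have hv : (τ ^ k) ((τ ^ (-k : ℤ)) v) = v := by
    rw [← AlgEquiv.mul_apply, ← zpow_natCast, ← zpow_add, add_neg_cancel, zpow_zero]
    rfl
  simpa [hv] using h

theorem mul_shift_ne_mul_of_isCoprime (hτ : τ X = X + 1) {u v : F[X]} (hv : v ≠ 0)
    (hcop : ∀ k : ℕ, IsCoprime ((τ ^ k) u) v) (hK : u ≠ v) :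
    ∀ (w : F[X]) (k : ℕ), w ≠ 0 → (τ ^ k) u * τ w ≠ v * w := by
  intro w
  induction hn : w.natDegree using Nat.strong_induction_on generalizing w with
  | _ n ih =>
  intro k hw h
  have hdeg : u.natDegree = v.natDegree := by
    rw [← natDegree_eq_of_mul_shift_eq hτ hw h, natDegree_shift_pow_apply hτ]
  have hlc := leadingCoeff_eq_of_mul_shift_eq hτ hw h
  rcases eq_or_ne u.natDegree 0 with hu | hu
  · obtain ⟨a, rfl⟩ := natDegree_eq_zero.mp hu
    obtain ⟨b, rfl⟩ := natDegree_eq_zero.mp (hdeg ▸ hu)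
    rw [← algebraMap_eq, AlgEquiv.commutes, algebraMap_eq] at hlc
    exact hK (by simpa using hlc)
  obtain ⟨w₁, hw₁⟩ : v ∣ τ w := (hcop k).symm.dvd_of_dvd_mul_left ⟨w, h⟩
  have hw_eq : w = (τ ^ k) u * w₁ := mul_left_cancel₀ hv (by rw [← h, hw₁]; ring)
  have hu₀ : (τ ^ k) u ≠ 0 := by
    rintro h₀; exact hw (by rw [hw_eq, h₀, zero_mul])
  have hw₁₀ : w₁ ≠ 0 := by rintro rfl; exact hw (by rw [hw_eq, mul_zero])
  have hdeg_lt : w₁.natDegree < n := by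
    rw [← hn, hw_eq, natDegree_mul hu₀ hw₁₀, natDegree_shift_pow_apply hτ]; omega
  refine ih _ hdeg_lt w₁ rfl (k + 1) hw₁₀ ?_
  rw [pow_succ', AlgEquiv.mul_apply, ← hw₁, ← map_mul, ← hw_eq]

end Polynomial

theorem stmt14_general (F : Type*) [Field F]
    (τ : Polynomial F ≃ₐ[F] Polynomial F) (hτ : τ Polynomial.X = Polynomial.X + 1)
    (u v : Polynomial F) (hv : v ≠ 0) (hcop : IsCoprime u v)
    (hred : ∀ ℓ : ℤ, ℓ ≠ 0 → IsCoprime u ((τ ^ ℓ) v))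
    (hK : u ≠ v) :
    Function.Injective (fun p : Polynomial F => u * τ p - v * p) := by
  intro p q h
  by_contra hpq
  refine mul_shift_ne_mul_of_isCoprime hτ hv (isCoprime_pow_apply_left hcop hred) hK (p - q) 0
    (sub_ne_zero.mpr hpq) ?_
  rw [pow_zero, AlgEquiv.one_apply, map_sub]
  linear_combination h

/-- Shift case: if `K = u/v` is σ-reduced and `K ≠ 1`, the map
`p ↦ u·σ(p) − v·p` on `F[y]` is injective. -/
theorem stmt14 (F : Type*) [Field F] [CharZero F]
    (τ : Polynomial F ≃ₐ[F] Polynomial F) (hτ : τ Polynomial.X = Polynomial.X + 1)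
    (u v : Polynomial F) (hv : v ≠ 0) (hcop : IsCoprime u v)
    (hred : ∀ ℓ : ℤ, ℓ ≠ 0 → IsCoprime u ((τ ^ ℓ) v))
    (hK : u ≠ v) :
    Function.Injective (fun p : Polynomial F => u * τ p - v * p) :=
  stmt14_general F τ hτ u v hv hcop hred hK
end

section
/- Let F be a field of characteristic zero and let σ_x, σ_y be the shift operators on F[x,y] with σ_x(p)(x,y) = p(x+1,y) and σ_y(p)(x,y) = p(x,y+1). An irreducible polynomial p ∈ F[x,y] satisfies p(x+m, y+n) = p(x,y) for some integers m, n not both zero if and only if p(x,y) = P(λx + μy) for some univariate polynomial P ∈ F[z] and integers λ, μ not both zero. -/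
open MvPolynomial

private lemma aeval_pt {F : Type*} [Field F] (a : Fin 2 → F) (z : MvPolynomial (Fin 2) F) :
    aeval a z = eval a z := by simp [aeval_def]

private lemma shift_const {F : Type*} [Field F] [CharZero F] (q : MvPolynomial (Fin 2) F)
    (c : F) (hc : c ≠ 0) (hq : aeval ![X 0 + C c, X 1] q = q) :
    q = aeval ![0, X 1] q := by
  apply MvPolynomial.funext
  intro a
  set r : Polynomial F := aeval ![Polynomial.X, Polynomial.C (a 1)] q with hrdef
  have hrev : ∀ t : F, r.eval t = eval ![t, a 1] q := by
    intro t
    rw [← Polynomial.coe_aeval_eq_eval, hrdef]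
    show (Polynomial.aeval t) (aeval _ q) = _
    rw [comp_aeval_apply, ← aeval_pt]
    refine congrFun (congrArg _ (congrArg _ ?_)) q
    funext i; fin_cases i <;> simp
  have hper : ∀ t : F, r.eval (t + c) = r.eval t := by
    intro t
    rw [hrev, hrev]
    conv_rhs => rw [← hq]
    rw [← aeval_pt, ← aeval_pt, comp_aeval_apply]
    refine congrFun (congrArg _ (congrArg _ ?_)) q
    funext i; fin_cases i <;> simp [aeval_pt]
  have hk : ∀ k : ℕ, r.eval ((k : F) * c) = r.eval 0 := by
    intro k; induction k with
    | zero => simp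
    | succ k ih => push_cast; rw [add_mul, one_mul, hper, ih]
  have hconst : r = Polynomial.C (r.eval 0) := by
    by_contra hne
    have h0 : r - Polynomial.C (r.eval 0) ≠ 0 := sub_ne_zero.mpr hne
    have hinf : {x : F | (r - Polynomial.C (r.eval 0)).IsRoot x}.Infinite := by
      apply Set.Infinite.mono (s := Set.range fun k : ℕ => (k : F) * c)
      · rintro x ⟨k, rfl⟩; simp [Polynomial.IsRoot, hk]
      · apply Set.infinite_range_of_injective
        intro k1 k2 hh
        exact Nat.cast_injective (mul_right_cancel₀ hc hh)
    exact h0 ((r - Polynomial.C (r.eval 0)).eq_zero_of_infinite_isRoot hinf)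
  have ha : a = ![a 0, a 1] := by funext i; fin_cases i <;> rfl
  have h2 : eval a (aeval ![0, X 1] q) = eval ![(0:F), a 1] q := by
    rw [← aeval_pt a, comp_aeval_apply, aeval_pt]
    refine congrFun (congrArg _ (congrArg _ ?_)) q
    funext i; fin_cases i <;> simp [aeval_pt]
  rw [h2, ← hrev 0]
  calc eval a q = r.eval (a 0) := by rw [hrev (a 0), ← ha]
    _ = r.eval 0 := by rw [hconst]; simp


private lemma key {F : Type*} [Field F] [CharZero F]
    (p : MvPolynomial (Fin 2) F) (c d : F) (hc : c ≠ 0)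
    (h : aeval ![X 0 + C c, X 1 + C d] p = p) :
    ∃ P : Polynomial F, p = Polynomial.aeval (C d * X 0 - C c * X 1) P := by
  have hcc : (C c : MvPolynomial (Fin 2) F) * C c⁻¹ = 1 := by
    rw [← C_mul, mul_inv_cancel₀ hc, C_1]
  set Sv : Fin 2 → MvPolynomial (Fin 2) F := ![X 0, (C d * X 0 - X 1) * C c⁻¹] with hSv
  set q := aeval Sv p with hqdef
  have hq : aeval ![X 0 + C c, X 1] q = q := by
    rw [hqdef]
    conv_rhs => rw [← h]
    rw [comp_aeval_apply, comp_aeval_apply]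
    refine congrFun (congrArg _ (congrArg _ ?_)) p
    funext i
    fin_cases i
    · simp [hSv]
    · show aeval ![X 0 + C c, X 1] ((C d * X 0 - X 1) * C c⁻¹) = aeval Sv (X 1 + C d)
      simp only [hSv, map_mul, map_sub, map_add, aeval_X, aeval_C, algebraMap_eq,
        Matrix.cons_val_zero, Matrix.cons_val_one, Matrix.head_cons]
      linear_combination (C d : MvPolynomial (Fin 2) F) * hcc
  have hq2 : q = aeval ![0, X 1] q := shift_const q c hc hq
  refine ⟨aeval ![(0 : Polynomial F), Polynomial.X] q, ?_⟩
  have hback : aeval ![X 0, C d * X 0 - C c * X 1] q = p := by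
    rw [hqdef, comp_aeval_apply]
    have hX : (fun i => aeval ![X 0, C d * X 0 - C c * X 1] (Sv i)) = X := by
      funext i; fin_cases i
      · simp [hSv]
      · show aeval ![X 0, C d * X 0 - C c * X 1] ((C d * X 0 - X 1) * C c⁻¹) = X 1
        simp only [hSv, map_mul, map_sub, map_add, aeval_X, aeval_C, algebraMap_eq,
          Matrix.cons_val_zero, Matrix.cons_val_one, Matrix.head_cons]
        linear_combination (X 1 : MvPolynomial (Fin 2) F) * hcc
    rw [hX, aeval_X_left_apply]
  rw [comp_aeval_apply, ← hback]
  conv_lhs => rw [hq2]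
  rw [comp_aeval_apply]
  refine congrFun (congrArg _ (congrArg _ ?_)) q
  funext i; fin_cases i <;> simp

/-- Shift case characterization of integer-linear irreducible bivariate polynomials:
`p(x+m, y+n) = p(x,y)` for some integers `m, n` not both zero iff
`p(x,y) = P(λx + μy)` for some `P ∈ F[z]` and integers `λ, μ` not both zero. -/
theorem stmt16 (F : Type*) [Field F] [CharZero F]
    (p : MvPolynomial (Fin 2) F) (hp : Irreducible p) :
    (∃ m n : ℤ, ¬(m = 0 ∧ n = 0) ∧
      MvPolynomial.aeval
        ![(X 0 : MvPolynomial (Fin 2) F) + MvPolynomial.C (m : F),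
          (X 1 : MvPolynomial (Fin 2) F) + MvPolynomial.C (n : F)] p = p) ↔
    (∃ (P : Polynomial F) (l μ : ℤ), ¬(l = 0 ∧ μ = 0) ∧
      p = Polynomial.aeval
        (MvPolynomial.C (l : F) * (X 0 : MvPolynomial (Fin 2) F) +
          MvPolynomial.C (μ : F) * (X 1 : MvPolynomial (Fin 2) F)) P) := by
  constructor
  · rintro ⟨m, n, hmn, h⟩
    by_cases hm : m = 0
    · subst hm
      have hn : n ≠ 0 := fun hn0 => hmn ⟨rfl, hn0⟩
      have hnF : ((n : ℤ) : F) ≠ 0 := Int.cast_ne_zero.mpr hn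
      -- swap variables
      set q : MvPolynomial (Fin 2) F := aeval ![X 1, X 0] p with hqdef
      have hswap : aeval ![(X 1 : MvPolynomial (Fin 2) F), X 0] q = p := by
        rw [hqdef, comp_aeval_apply]
        have hX : (fun i => aeval ![(X 1 : MvPolynomial (Fin 2) F), X 0] (![(X 1 : MvPolynomial (Fin 2) F), X 0] i)) = X := by
          funext i; fin_cases i <;> simp
        rw [hX, aeval_X_left_apply]
      have hq : aeval ![X 0 + C ((n : ℤ) : F), X 1 + C (0 : F)] q = q := by
        rw [hqdef]
        conv_rhs => rw [← h]
        rw [comp_aeval_apply, comp_aeval_apply]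
        refine congrFun (congrArg _ (congrArg _ ?_)) p
        funext i; fin_cases i <;> simp
      obtain ⟨P, hP⟩ := key q ((n : ℤ) : F) 0 hnF hq
      refine ⟨P, -n, 0, fun hcon => hn (neg_eq_zero.mp hcon.1), ?_⟩
      have hp2 : p = aeval ![(X 1 : MvPolynomial (Fin 2) F), X 0]
          (Polynomial.aeval (C (0:F) * X 0 - C ((n : ℤ) : F) * X 1) P) := by
        rw [← hP, hswap]
      rw [hp2, ← Polynomial.aeval_algHom_apply]
      refine congrFun (congrArg _ (congrArg _ ?_)) P
      push_cast
      simp only [map_add, map_mul, map_neg, map_sub, map_zero, aeval_X, aeval_C, algebraMap_eq,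
        Matrix.cons_val_zero, Matrix.cons_val_one, Matrix.head_cons, zero_mul, zero_add]
      ring
    · have hmF : ((m : ℤ) : F) ≠ 0 := Int.cast_ne_zero.mpr hm
      obtain ⟨P, hP⟩ := key p ((m : ℤ) : F) ((n : ℤ) : F) hmF h
      refine ⟨P, n, -m, fun hcon => hm (neg_eq_zero.mp hcon.2), ?_⟩
      rw [hP]
      refine congrFun (congrArg _ (congrArg _ ?_)) P
      push_cast
      simp only [map_add, map_mul, map_neg, map_sub, map_zero, aeval_X, aeval_C, algebraMap_eq,
        Matrix.cons_val_zero, Matrix.cons_val_one, Matrix.head_cons, zero_mul, zero_add]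
      ring
  · rintro ⟨P, l, μ, hlμ, hpP⟩
    refine ⟨μ, -l, fun hcon => hlμ ⟨neg_eq_zero.mp hcon.2, hcon.1⟩, ?_⟩
    rw [hpP, ← Polynomial.aeval_algHom_apply]
    refine congrFun (congrArg _ (congrArg _ ?_)) P
    push_cast
    simp only [map_add, map_mul, map_neg, aeval_X, aeval_C, algebraMap_eq,
      Matrix.cons_val_zero, Matrix.cons_val_one, Matrix.head_cons, map_sub]
    ring
end
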